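/- arXiv:math/0509253 — 2 statements merged into one kernel-verified Lean document; each statement's English description precedes it below -/
import Mathlib

section
/- Let G be a finite connected graph whose vertex set is partitioned into sets S and I, let k ≥ 1 be an integer, and suppose |S| ≥ |V(G)|/k. Then for any integer t with 1 ≤ t ≤ |V(G)|/2, there exists a subtree T of G with t ≤ |V(T)| ≤ 2t − 1 such that at least a 1/k fraction of the vertices of T lie in S. -/
/-!
Candidates are vertex sets of connected induced subgraphs; each contains a spanning tree, which is
the required subtree. A connected set `W` is a star around any of its vertices `v`: `v` together
with pairwise disjoint connected pieces, each adjacent to `v`, and `v` with any subfamily of its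
pieces is again connected. Moving the centre into a piece with at least `t` vertices (the centroid
argument) either splits `W` into two connected parts with at least `t` vertices each, one of which
is at least as dense in `S` as `W`, or ends at a star all of whose pieces have fewer than `t`
vertices. In the first case recurse into the denser part; in the second, discard pieces of least
`S`-density until fewer than `2t` vertices remain: each step removes fewer than `t` vertices and
keeps the density at least `1/k`.
-/

open Finset

/-- Discarding a part of minimal density `s / d` from a whole of density at least `1/k` keeps the
density at least `1/k`, as long as a part of positive size remains; the extra `1` in the size and
the extra `c` in the weight account for the centre of a star. -/
theorem one_add_le_mul_add_of_min_density {k c D S d s : ℕ} (hD : 0 < D)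
    (hmin : s * (d + D) ≤ (s + S) * d) (h : 1 + (d + D) ≤ k * (c + (s + S))) :
    1 + D ≤ k * (c + S) := by
  by_contra! hlt
  have hs : 1 + d ≤ k * s := by nlinarith
  have hsD : s * D ≤ S * d := by nlinarith
  have hkS : k * S ≤ D := by nlinarith
  nlinarith [Nat.mul_le_mul_left k hsD, Nat.mul_le_mul_right D hs, Nat.mul_le_mul_right d hkS]

theorem exists_dense_subfamily {α : Type*} [DecidableEq α] (d s : α → ℕ) {k c t : ℕ}
    (ht : 0 < t) (𝒜 : Finset α) (hd : ∀ a ∈ 𝒜, d a < t) (hlow : t ≤ 1 + ∑ a ∈ 𝒜, d a)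
    (hdense : 1 + ∑ a ∈ 𝒜, d a ≤ k * (c + ∑ a ∈ 𝒜, s a)) :
    ∃ 𝒥 ⊆ 𝒜, t ≤ 1 + ∑ a ∈ 𝒥, d a ∧ 1 + ∑ a ∈ 𝒥, d a < 2 * t ∧
      1 + ∑ a ∈ 𝒥, d a ≤ k * (c + ∑ a ∈ 𝒥, s a) := by
  induction 𝒜 using Finset.strongInduction with
  | H 𝒜 ih =>
  by_cases hsmall : 1 + ∑ a ∈ 𝒜, d a < 2 * t
  · exact ⟨𝒜, subset_rfl, hlow, hsmall, hdense⟩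
  have hne : 𝒜.Nonempty := by
    rw [nonempty_iff_ne_empty]
    rintro rfl
    simp only [sum_empty] at hsmall
    omega
  obtain ⟨a, ha, hmin⟩ : ∃ a ∈ 𝒜, s a * ∑ b ∈ 𝒜, d b ≤ (∑ b ∈ 𝒜, s b) * d a :=
    exists_le_of_sum_le hne (by rw [← sum_mul, ← mul_sum, mul_comm])
  rw [← add_sum_erase _ _ ha, ← add_sum_erase _ _ ha] at hdense hmin
  rw [← add_sum_erase _ _ ha] at hsmall
  have hda := hd a ha
  obtain ⟨𝒥, h𝒥, h𝒥'⟩ := ih (𝒜.erase a) (erase_ssubset ha)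
    (fun b hb => hd b (mem_of_mem_erase hb)) (by omega)
    (one_add_le_mul_add_of_min_density (by omega) hmin hdense)
  exact ⟨𝒥, h𝒥.trans (erase_subset _ _), h𝒥'⟩

namespace Finset

variable {α : Type*} [DecidableEq α] {𝒜 : Finset (Finset α)} {a : α}

theorem card_insert_biUnion (h𝒜 : (𝒜 : Set (Finset α)).PairwiseDisjoint id)
    (ha : ∀ A ∈ 𝒜, a ∉ A) : #(insert a (𝒜.biUnion id)) = 1 + ∑ A ∈ 𝒜, #A := by
  rw [card_insert_of_notMem (by simpa using ha), card_biUnion h𝒜, add_comm]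
  rfl

theorem card_insert_biUnion_inter (h𝒜 : (𝒜 : Set (Finset α)).PairwiseDisjoint id)
    (ha : ∀ A ∈ 𝒜, a ∉ A) (S : Finset α) :
    #(insert a (𝒜.biUnion id) ∩ S) = #({a} ∩ S) + ∑ A ∈ 𝒜, #(A ∩ S) := by
  have hdisj : Disjoint {a} (𝒜.biUnion id) := by simpa using ha
  rw [insert_eq, union_inter_distrib_right, card_union_of_disjoint
    (hdisj.mono inter_subset_left inter_subset_left), biUnion_inter, card_biUnion]
  · rfl
  · exact fun A hA B hB hAB => (h𝒜 hA hB hAB).mono inter_subset_left inter_subset_left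

theorem insert_biUnion_eq_union_erase {A : Finset α} (hA : A ∈ 𝒜) :
    insert a (𝒜.biUnion id) = A ∪ insert a ((𝒜.erase A).biUnion id) := by
  conv_lhs => rw [← insert_erase hA]
  rw [biUnion_insert, id, union_insert]

end Finset

namespace SimpleGraph

variable {V : Type*} {G : SimpleGraph V}

theorem connected_induce_singleton (v : V) : (G.induce ({v} : Set V)).Connected :=
  ⟨.of_subsingleton⟩

theorem connected_induce_univ (h : G.Connected) : (G.induce (Set.univ : Set V)).Connected :=
  (induceUnivIso G).connected_iff.mpr h

theorem exists_isTree_subgraph_of_connected {A : Set V} (h : (G.induce A).Connected) :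
    ∃ H : G.Subgraph, H.coe.IsTree ∧ H.verts = A := by
  obtain ⟨T, hTG, hT⟩ := h.exists_isTree_le
  let H : G.Subgraph :=
    { verts := A
      Adj := fun a b => ∃ (ha : a ∈ A) (hb : b ∈ A), T.Adj ⟨a, ha⟩ ⟨b, hb⟩
      adj_sub := fun ⟨_, _, hab⟩ => hTG hab
      edge_vert := fun ⟨ha, _, _⟩ => ha
      symm := ⟨fun _ _ ⟨ha, hb, hab⟩ => ⟨hb, ha, hab.symm⟩⟩ }
  have e : H.coe ≃g T := { Equiv.refl _ with map_rel_iff' := by simp [H] }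
  exact ⟨H, e.isTree_iff.mpr hT, rfl⟩

theorem exists_adj_of_connected_induce {W X : Finset V} (hW : (G.induce (W : Set V)).Connected)
    (hXW : X ⊂ W) (hX : X.Nonempty) : ∃ u ∈ X, ∃ w ∈ W, w ∉ X ∧ G.Adj u w := by
  obtain ⟨x, hxW, hxX⟩ := exists_of_ssubset hXW
  obtain ⟨u, hu⟩ := hX
  obtain ⟨d, -, hd₁, hd₂⟩ :=
    (hW.preconnected ⟨u, hXW.subset hu⟩ ⟨x, hxW⟩).some.exists_boundary_dart
      {y : (W : Set V) | (y : V) ∈ X} hu hxX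
  exact ⟨d.fst, hd₁, d.snd, d.snd.2, hd₂, d.adj⟩

/-- The pieces of a star centred at `v`, e.g. the vertex sets of the components of `W - v` for a
connected set `W ∋ v`; the star itself has vertex set `insert v (𝒜.biUnion id)`. -/
structure IsStar (G : SimpleGraph V) (v : V) (𝒜 : Finset (Finset V)) : Prop where
  pairwiseDisjoint : (𝒜 : Set (Finset V)).PairwiseDisjoint id
  notMem : ∀ A ∈ 𝒜, v ∉ A
  connected : ∀ A ∈ 𝒜, (G.induce (A : Set V)).Connected
  exists_adj : ∀ A ∈ 𝒜, ∃ a ∈ A, G.Adj v a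

theorem isStar_empty (v : V) : G.IsStar v ∅ := ⟨by simp, by simp, by simp, by simp⟩

namespace IsStar

variable {v : V} {𝒜 ℬ : Finset (Finset V)}

theorem mono (h : G.IsStar v 𝒜) (hℬ : ℬ ⊆ 𝒜) : G.IsStar v ℬ where
  pairwiseDisjoint := h.pairwiseDisjoint.subset (by simpa using hℬ)
  notMem A hA := h.notMem A (hℬ hA)
  connected A hA := h.connected A (hℬ hA)
  exists_adj A hA := h.exists_adj A (hℬ hA)

variable [DecidableEq V]

theorem connected_induce (h : G.IsStar v 𝒜) :
    (G.induce (insert v (𝒜.biUnion id) : Finset V)).Connected := by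
  induction 𝒜 using Finset.induction_on with
  | empty =>
    rw [biUnion_empty, insert_empty, coe_singleton]
    exact connected_induce_singleton v
  | insert A 𝒜 _ ih =>
    obtain ⟨a, ha, hva⟩ := h.exists_adj A (mem_insert_self A 𝒜)
    have hunion : ((insert v ((insert A 𝒜).biUnion id) : Finset V) : Set V) =
        ↑(insert v (𝒜.biUnion id)) ∪ ↑A := by
      ext
      simp only [biUnion_insert, coe_insert, coe_union, coe_biUnion]
      grind
    rw [hunion]
    exact connected_induce_union (ih (h.mono (subset_insert A 𝒜))).preconnected
      (h.connected A (mem_insert_self A 𝒜)).preconnected (by simp) ha hva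

theorem disjoint_insert_biUnion_erase (h : G.IsStar v 𝒜) {A : Finset V} (hA : A ∈ 𝒜) :
    Disjoint A (insert v ((𝒜.erase A).biUnion id)) := by
  rw [disjoint_insert_right, disjoint_biUnion_right]
  exact ⟨h.notMem A hA, fun B hB =>
    h.pairwiseDisjoint hA (mem_of_mem_erase hB) (ne_of_mem_erase hB).symm⟩

theorem insert_singleton (h : G.IsStar v 𝒜) {w : V} (hw : w ∉ insert v (𝒜.biUnion id))
    (hvw : G.Adj v w) : G.IsStar v (insert {w} 𝒜) := by
  simp only [mem_insert, mem_biUnion, id, not_or, not_exists, not_and] at hw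
  refine ⟨?_, ?_, ?_, ?_⟩
  · rw [coe_insert]
    exact h.pairwiseDisjoint.insert fun A hA _ => disjoint_singleton_left.mpr (hw.2 A hA)
  · simpa [Ne.symm hw.1] using h.notMem
  · simp only [mem_insert, forall_eq_or_imp]
    exact ⟨by rw [coe_singleton]; exact connected_induce_singleton w, h.connected⟩
  · simpa [hvw] using h.exists_adj

theorem insert_insert_erase (h : G.IsStar v 𝒜) {A : Finset V} (hA : A ∈ 𝒜) {u w : V}
    (hu : u ∈ A) (hw : w ∉ insert v (𝒜.biUnion id)) (huw : G.Adj u w) :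
    G.IsStar v (insert (insert w A) (𝒜.erase A)) := by
  simp only [mem_insert, mem_biUnion, id, not_or, not_exists, not_and] at hw
  refine ⟨?_, ?_, ?_, ?_⟩
  · rw [coe_insert]
    refine (h.pairwiseDisjoint.subset (by simp)).insert fun B hB _ => ?_
    have hB𝒜 : B ∈ 𝒜 := mem_of_mem_erase hB
    exact disjoint_insert_left.mpr
      ⟨hw.2 B hB𝒜, h.pairwiseDisjoint hA hB𝒜 (ne_of_mem_erase hB).symm⟩
  · simp only [mem_insert, forall_eq_or_imp, not_or]
    exact ⟨⟨Ne.symm hw.1, h.notMem A hA⟩, fun B hB => h.notMem B (mem_of_mem_erase hB)⟩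
  · simp only [mem_insert, forall_eq_or_imp]
    refine ⟨?_, fun B hB => h.connected B (mem_of_mem_erase hB)⟩
    rw [coe_insert, Set.insert_eq]
    exact connected_induce_union (connected_induce_singleton w).preconnected
      (h.connected A hA).preconnected rfl hu huw.symm
  · simp only [mem_insert, forall_eq_or_imp]
    refine ⟨?_, fun B hB => h.exists_adj B (mem_of_mem_erase hB)⟩
    obtain ⟨a, ha, hva⟩ := h.exists_adj A hA
    exact ⟨a, Or.inr ha, hva⟩

theorem exists_insert (h : G.IsStar v 𝒜) {u w : V} (hu : u ∈ insert v (𝒜.biUnion id))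
    (hw : w ∉ insert v (𝒜.biUnion id)) (huw : G.Adj u w) :
    ∃ ℬ, G.IsStar v ℬ ∧ insert v (ℬ.biUnion id) = insert w (insert v (𝒜.biUnion id)) := by
  obtain rfl | hu := mem_insert.mp hu
  · refine ⟨_, h.insert_singleton hw huw, ?_⟩
    rw [biUnion_insert, id, ← insert_eq, insert_comm]
  · obtain ⟨A, hA, huA⟩ := mem_biUnion.mp hu
    refine ⟨_, h.insert_insert_erase hA huA hw huw, ?_⟩
    conv_rhs => rw [← insert_erase hA]
    rw [biUnion_insert, biUnion_insert, id, id, insert_union, insert_comm]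

end IsStar

variable [DecidableEq V]

theorem exists_isStar {W : Finset V} (hW : (G.induce (W : Set V)).Connected) {v : V}
    (hv : v ∈ W) : ∃ 𝒜, G.IsStar v 𝒜 ∧ insert v (𝒜.biUnion id) = W := by
  suffices h : ∀ n 𝒜, G.IsStar v 𝒜 → insert v (𝒜.biUnion id) ⊆ W →
      #W ≤ #(insert v (𝒜.biUnion id)) + n → ∃ ℬ, G.IsStar v ℬ ∧ insert v (ℬ.biUnion id) = W from
    h #W ∅ (isStar_empty v) (by simpa using hv) (by omega)
  intro n
  induction n with
  | zero => exact fun 𝒜 h𝒜 hsub hcard => ⟨𝒜, h𝒜, eq_of_subset_of_card_le hsub hcard⟩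
  | succ n ih =>
    intro 𝒜 h𝒜 hsub hcard
    obtain heq | hssub := hsub.eq_or_ssubset
    · exact ⟨𝒜, h𝒜, heq⟩
    obtain ⟨u, hu, w, hwW, hw, huw⟩ :=
      exists_adj_of_connected_induce hW hssub (insert_nonempty _ _)
    obtain ⟨ℬ, hℬ, hℬ𝒜⟩ := h𝒜.exists_insert hu hw huw
    refine ih ℬ hℬ (hℬ𝒜 ▸ insert_subset hwW hsub) ?_
    rw [hℬ𝒜, card_insert_of_notMem hw]
    omega

/-- The new pieces are the rest of the old star, hanging off `s` through `v`, and pieces strictly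
inside `A`. -/
theorem IsStar.exists_recenter {v : V} {𝒜 : Finset (Finset V)} (h : G.IsStar v 𝒜)
    {A : Finset V} (hA : A ∈ 𝒜) {s : V} (hs : s ∈ A) (hvs : G.Adj v s) :
    ∃ ℬ, G.IsStar s ℬ ∧ insert s (ℬ.biUnion id) = insert v (𝒜.biUnion id) ∧
      ∀ B ∈ ℬ, #B < #A ∨ B = insert v ((𝒜.erase A).biUnion id) := by
  set R := insert v ((𝒜.erase A).biUnion id)
  obtain ⟨𝒞, h𝒞, h𝒞A⟩ := exists_isStar (h.connected A hA) hs
  have hRA : Disjoint A R := h.disjoint_insert_biUnion_erase hA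
  have hsub : ∀ C ∈ 𝒞, C ⊆ A := fun C hC =>
    h𝒞A ▸ (subset_biUnion_of_mem id hC).trans (subset_insert _ _)
  refine ⟨insert R 𝒞, ⟨?_, ?_, ?_, ?_⟩, ?_, ?_⟩
  · rw [coe_insert]
    exact h𝒞.pairwiseDisjoint.insert fun C hC _ => (hRA.mono_left (hsub C hC)).symm
  · simp only [mem_insert, forall_eq_or_imp]
    exact ⟨Finset.disjoint_left.mp hRA hs, h𝒞.notMem⟩
  · simp only [mem_insert, forall_eq_or_imp]
    exact ⟨(h.mono (erase_subset A 𝒜)).connected_induce, h𝒞.connected⟩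
  · simp only [mem_insert, forall_eq_or_imp]
    exact ⟨⟨v, mem_insert_self _ _, hvs.symm⟩, h𝒞.exists_adj⟩
  · rw [biUnion_insert, id, ← union_insert, h𝒞A, union_comm, insert_biUnion_eq_union_erase hA]
  · simp only [mem_insert, forall_eq_or_imp]
    refine ⟨by simp, fun C hC => Or.inl (card_lt_card ?_)⟩
    exact (ssubset_iff_of_subset (hsub C hC)).mpr ⟨s, hs, h𝒞.notMem C hC⟩

theorem exists_split_or_isStar {t : ℕ} {W : Finset V} (hW : (G.induce (W : Set V)).Connected)
    (hne : W.Nonempty) :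
    (∃ A B : Finset V, (G.induce (A : Set V)).Connected ∧ (G.induce (B : Set V)).Connected ∧
        Disjoint A B ∧ A ∪ B = W ∧ t ≤ #A ∧ t ≤ #B) ∨
      ∃ v 𝒜, G.IsStar v 𝒜 ∧ insert v (𝒜.biUnion id) = W ∧ ∀ A ∈ 𝒜, #A < t := by
  obtain ⟨v₀, hv₀⟩ := hne
  obtain ⟨𝒜₀, h𝒜₀, hW₀⟩ := exists_isStar hW hv₀
  suffices key : ∀ m v 𝒜, G.IsStar v 𝒜 → insert v (𝒜.biUnion id) = W → (∀ A ∈ 𝒜, #A ≤ m) →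
      (∃ A B : Finset V, (G.induce (A : Set V)).Connected ∧ (G.induce (B : Set V)).Connected ∧
        Disjoint A B ∧ A ∪ B = W ∧ t ≤ #A ∧ t ≤ #B) ∨
      ∃ v 𝒜, G.IsStar v 𝒜 ∧ insert v (𝒜.biUnion id) = W ∧ ∀ A ∈ 𝒜, #A < t from
    key #W v₀ 𝒜₀ h𝒜₀ hW₀ fun A hA =>
      card_le_card (hW₀ ▸ (subset_biUnion_of_mem id hA).trans (subset_insert _ _))
  intro m
  induction m using Nat.strong_induction_on with
  | _ m ih =>
  intro v 𝒜 h hvW hm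
  by_cases hbig : ∃ A ∈ 𝒜, t ≤ #A
  swap
  · push Not at hbig
    exact Or.inr ⟨v, 𝒜, h, hvW, hbig⟩
  obtain ⟨A, hA, htA⟩ := hbig
  have hW : A ∪ insert v ((𝒜.erase A).biUnion id) = W := by
    rw [← insert_biUnion_eq_union_erase hA, hvW]
  by_cases hR : t ≤ #(insert v ((𝒜.erase A).biUnion id))
  · exact Or.inl ⟨A, _, h.connected A hA, (h.mono (erase_subset A 𝒜)).connected_induce,
      h.disjoint_insert_biUnion_erase hA, hW, htA, hR⟩
  have hcard := card_union_of_disjoint (h.disjoint_insert_biUnion_erase hA)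
  rw [hW] at hcard
  obtain ⟨s, hs, hvs⟩ := h.exists_adj A hA
  obtain ⟨ℬ, hℬ, hℬW, hℬA⟩ := h.exists_recenter hA hs hvs
  have hAm := hm A hA
  -- every piece of the new star is smaller than `A`: either inside `A`, or the rest of size `< t`
  refine ih (#A - 1) (by omega) s ℬ hℬ (hℬW.trans hvW) fun B hB => ?_
  rcases hℬA B hB with hB | rfl <;> omega

theorem exists_connected_dense (S : Finset V) {k t : ℕ} (ht : 0 < t) {W : Finset V}
    (hW : (G.induce (W : Set V)).Connected) (htW : t ≤ #W) (hWS : #W ≤ k * #(W ∩ S)) :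
    ∃ U : Finset V, (G.induce (U : Set V)).Connected ∧ t ≤ #U ∧ #U < 2 * t ∧
      #U ≤ k * #(U ∩ S) := by
  induction hn : #W using Nat.strong_induction_on generalizing W with
  | _ n ih =>
  by_cases hsmall : #W < 2 * t
  · exact ⟨W, hW, htW, hsmall, hWS⟩
  rcases exists_split_or_isStar hW (card_pos.mp (by omega)) with
    ⟨A, B, hA, hB, hAB, rfl, htA, htB⟩ | ⟨v, 𝒜, h, rfl, h𝒜t⟩
  · have hcard : #(A ∪ B) = #A + #B := card_union_of_disjoint hAB
    have hcardS : #((A ∪ B) ∩ S) = #(A ∩ S) + #(B ∩ S) := by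
      rw [union_inter_distrib_right,
        card_union_of_disjoint (hAB.mono inter_subset_left inter_subset_left)]
    rw [hcardS, mul_add] at hWS
    by_cases hA' : #A ≤ k * #(A ∩ S)
    · exact ih #A (by omega) hA htA hA' rfl
    · exact ih #B (by omega) hB htB (by omega) rfl
  · rw [card_insert_biUnion h.pairwiseDisjoint h.notMem] at htW
    rw [card_insert_biUnion h.pairwiseDisjoint h.notMem,
      card_insert_biUnion_inter h.pairwiseDisjoint h.notMem] at hWS
    obtain ⟨𝒥, h𝒥, ht𝒥, h𝒥t, h𝒥S⟩ :=
      exists_dense_subfamily card (fun A => #(A ∩ S)) ht 𝒜 h𝒜t htW hWS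
    have h𝒥' := h.mono h𝒥
    refine ⟨insert v (𝒥.biUnion id), ?_⟩
    rw [card_insert_biUnion h𝒥'.pairwiseDisjoint h𝒥'.notMem,
      card_insert_biUnion_inter h𝒥'.pairwiseDisjoint h𝒥'.notMem]
    exact ⟨h𝒥'.connected_induce, ht𝒥, h𝒥t, h𝒥S⟩

end SimpleGraph

open Finset SimpleGraph in
/-- Tree-sampling lemma: let `G` be a finite connected graph whose vertices are
partitioned into `S` and its complement, let `k ≥ 1` be an integer with
`|S| ≥ |V(G)|/k`. Then for any integer `t` with `1 ≤ t ≤ |V(G)|/2` there is a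
subtree `T` of `G` with `t ≤ |V(T)| ≤ 2t − 1` in which at least a `1/k` fraction
of the vertices lie in `S`. -/
theorem stmt_3 {V : Type} [Fintype V] (G : SimpleGraph V) (hconn : G.Connected)
    (S : Set V) (k t : ℕ) (hk : 1 ≤ k)
    (hS : (Fintype.card V : ℝ) / k ≤ S.ncard)
    (ht1 : 1 ≤ t) (ht2 : (t : ℝ) ≤ (Fintype.card V : ℝ) / 2) :
    ∃ H : G.Subgraph, H.coe.IsTree ∧ t ≤ H.verts.ncard ∧ H.verts.ncard ≤ 2 * t - 1 ∧
      (H.verts.ncard : ℝ) / k ≤ ((H.verts ∩ S).ncard : ℝ) := by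
  classical
  have hk' : (0 : ℝ) < k := by exact_mod_cast hk
  rw [div_le_iff₀ hk', Set.ncard_eq_toFinset_card'] at hS
  rw [le_div_iff₀ two_pos] at ht2
  have hVS : #(univ : Finset V) ≤ k * #(univ ∩ S.toFinset) := by
    rw [univ_inter, card_univ, mul_comm]
    exact_mod_cast hS
  have htV : t ≤ #(univ : Finset V) := by
    rw [card_univ]
    exact_mod_cast (by linarith : (t : ℝ) ≤ Fintype.card V)
  obtain ⟨U, hU, htU, hUt, hUS⟩ := exists_connected_dense S.toFinset ht1
    (by rw [coe_univ]; exact connected_induce_univ hconn) htV hVS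
  obtain ⟨H, hH, hHU⟩ := exists_isTree_subgraph_of_connected hU
  have hHS : H.verts ∩ S = ↑(U ∩ S.toFinset) := by simp [hHU]
  refine ⟨H, hH, ?_, ?_, ?_⟩
  · rwa [hHU, Set.ncard_coe_finset]
  · rw [hHU, Set.ncard_coe_finset]
    omega
  · rw [hHS, hHU, Set.ncard_coe_finset, Set.ncard_coe_finset, div_le_iff₀ hk', mul_comm]
    exact_mod_cast hUS
end

section
/- Let G be an (n, d, c√d) algebraic expander with c ≥ 1, let p satisfy pd ≥ 5c√d, and let H be an induced subgraph of G with minimum degree at least 3pd/5 (in H). Then every vertex subset S of H with |S| ≤ cn/√d satisfies |∂_E S| ≥ (pd/5)|S|, where ∂_E S is the set of edges of H with exactly one endpoint in S. -/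
/-!
Let `χ` be the indicator of `S` and `x = χ - (|S|/n)·𝟙`, which sums to zero. Regularity turns
the quadratic form of `x` into `e(S,S) - d|S|²/n`, so the spectral bound gives
`e(S,S) ≤ λ|S| + d|S|²/n`, and for `|S| ≤ λn/d` (here `λ = c√d`) this is at most `2λ|S|`.
Every vertex of `S` has at least `3pd/5` neighbours in `W` and `λ ≤ pd/5`, so at least
`(3pd/5 - 2pd/5)|S|` edges of `H` leave `S`.
-/
open Finset

/-- Spectral bound: the second largest eigenvalue of `G` in absolute value is at most `lam`. -/
def specBound {V : Type} [Fintype V] (G : SimpleGraph V) [DecidableRel G.Adj] (lam : ℝ) : Prop :=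
  ∀ x : V → ℝ, (∑ v, x v) = 0 →
    |∑ u, ∑ v, (if G.Adj u v then x u * x v else 0)| ≤ lam * ∑ v, (x v) ^ 2

open Matrix

namespace SimpleGraph

variable {V : Type} (G : SimpleGraph V) [DecidableRel G.Adj]

def edgeCount (A B : Finset V) : ℝ := ∑ u ∈ A, ∑ v ∈ B, if G.Adj u v then 1 else 0

theorem edgeCount_sdiff [DecidableEq V] {S W : Finset V} (hSW : S ⊆ W) :
    G.edgeCount S (W \ S) = G.edgeCount S W - G.edgeCount S S := by
  rw [edgeCount, edgeCount, edgeCount, ← sum_sub_distrib]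
  refine sum_congr rfl fun u _ => ?_
  rw [eq_sub_iff_add_eq, sum_sdiff hSW]

theorem mul_card_le_edgeCount {δ : ℝ} {S W : Finset V}
    (hmin : ∀ v ∈ S, δ ≤ #(W.filter (G.Adj v))) : δ * #S ≤ G.edgeCount S W := by
  rw [mul_comm, ← nsmul_eq_mul, edgeCount]
  refine card_nsmul_le_sum S _ δ fun u hu => ?_
  rw [sum_boole]
  exact hmin u hu

variable [Fintype V]

theorem edgeCount_self_eq_dotProduct [DecidableEq V] (S : Finset V) :
    G.edgeCount S S = (fun v => if v ∈ S then 1 else 0) ⬝ᵥ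
      G.adjMatrix ℝ *ᵥ (fun v => if v ∈ S then 1 else 0) := by
  have h (u v : V) : (if G.Adj u v then (if u ∈ S then (1 : ℝ) else 0) * (if v ∈ S then 1 else 0)
      else 0) = if u ∈ S then if v ∈ S then if G.Adj u v then 1 else 0 else 0 else 0 := by
    split_ifs <;> simp
  simp only [edgeCount, dotProduct_mulVec_adjMatrix, h, sum_ite_irrel, sum_const_zero,
    sum_ite_mem, univ_inter]

theorem dotProduct_adjMatrix_mulVec_const {d : ℕ} (hreg : G.IsRegularOfDegree d)
    (x : V → ℝ) (a : ℝ) :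
    x ⬝ᵥ G.adjMatrix ℝ *ᵥ Function.const V a = d * a * ∑ v, x v := by
  have : G.adjMatrix ℝ *ᵥ Function.const V a = Function.const V (d * a) :=
    funext fun _ => adjMatrix_mulVec_const_apply_of_regular hreg
  rw [this, dotProduct_comm]
  simp [dotProduct, mul_sum]

theorem const_dotProduct_adjMatrix_mulVec {d : ℕ} (hreg : G.IsRegularOfDegree d)
    (a : ℝ) (x : V → ℝ) :
    Function.const V a ⬝ᵥ G.adjMatrix ℝ *ᵥ x = d * a * ∑ v, x v := by
  rw [dotProduct_mulVec, ← mulVec_transpose, transpose_adjMatrix, dotProduct_comm,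
    dotProduct_adjMatrix_mulVec_const G hreg]

theorem dotProduct_adjMatrix_mulVec_sub_const {d : ℕ} (hreg : G.IsRegularOfDegree d)
    (x : V → ℝ) (a : ℝ) :
    (x - Function.const V a) ⬝ᵥ G.adjMatrix ℝ *ᵥ (x - Function.const V a) =
      x ⬝ᵥ G.adjMatrix ℝ *ᵥ x - 2 * d * a * ∑ v, x v + d * a ^ 2 * Fintype.card V := by
  have hconst : ∑ v, Function.const V a v = Fintype.card V * a := by simp
  rw [mulVec_sub, dotProduct_sub, sub_dotProduct, sub_dotProduct,
    dotProduct_adjMatrix_mulVec_const G hreg, dotProduct_adjMatrix_mulVec_const G hreg,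
    const_dotProduct_adjMatrix_mulVec G hreg, hconst]
  ring

theorem _root_.specBound.edgeCount_self_le [DecidableEq V] {d : ℕ} {lam : ℝ}
    (hreg : G.IsRegularOfDegree d) (hspec : specBound G lam) (S : Finset V) :
    G.edgeCount S S ≤ lam * (#S - #S ^ 2 / Fintype.card V) + d * #S ^ 2 / Fintype.card V := by
  set χ : V → ℝ := fun v => if v ∈ S then 1 else 0
  set a : ℝ := #S / Fintype.card V
  have hχ : ∑ v, χ v = #S := by simp [χ]
  have hNa : Fintype.card V * a = #S := mul_div_cancel_of_imp' fun hN => by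
    have : #S ≤ Fintype.card V := card_le_univ S
    norm_cast at hN ⊢
    omega
  have hsum : ∑ v, (χ - Function.const V a) v = 0 := by
    simp [sum_sub_distrib, hχ, hNa]
  have ha : (#S : ℝ) ^ 2 / Fintype.card V = a * #S := by simp only [a]; ring
  clear_value a
  have hsq : ∑ v, (χ - Function.const V a) v ^ 2 = #S - #S ^ 2 / Fintype.card V := by
    have h (v : V) : (χ - Function.const V a) v ^ 2 = χ v - 2 * a * χ v + a ^ 2 := by
      have hχv : χ v ^ 2 = χ v := by by_cases hv : v ∈ S <;> simp [χ, hv]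
      rw [Pi.sub_apply, Function.const_apply, sub_sq, hχv]
      ring
    simp only [h, sum_add_distrib, sum_sub_distrib, ← mul_sum, hχ, sum_const, card_univ,
      nsmul_eq_mul]
    linear_combination a * hNa + ha
  have hquad := hspec _ hsum
  rw [← dotProduct_mulVec_adjMatrix, dotProduct_adjMatrix_mulVec_sub_const G hreg,
    ← edgeCount_self_eq_dotProduct, hχ, hsq] at hquad
  linear_combination (le_abs_self _).trans hquad - (d * a) * hNa - d * ha

theorem _root_.specBound.edgeCount_self_le_of_card_mul_le [DecidableEq V] {d : ℕ} {lam : ℝ}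
    (hreg : G.IsRegularOfDegree d) (hspec : specBound G lam) {S : Finset V}
    (hS : #S * d ≤ lam * Fintype.card V) :
    G.edgeCount S S ≤ 2 * lam * #S := by
  rcases S.eq_empty_or_nonempty with rfl | ⟨v, -⟩
  · simp [edgeCount]
  have hN : (0 : ℝ) < Fintype.card V := by exact_mod_cast Fintype.card_pos_iff.mpr ⟨v⟩
  have hdens : #S * d / Fintype.card V ≤ lam := (div_le_iff₀ hN).mpr hS
  have hlam : 0 ≤ lam := le_trans (by positivity) hdens
  calc G.edgeCount S S
      ≤ lam * (#S - #S ^ 2 / Fintype.card V) + #S * (#S * d / Fintype.card V) := by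
        convert hspec.edgeCount_self_le G hreg S using 2; ring
    _ ≤ lam * #S + #S * lam := by
        gcongr
        exact sub_le_self _ (by positivity)
    _ = 2 * lam * #S := by ring

end SimpleGraph

theorem stmt_7_general {V : Type} [Fintype V] [DecidableEq V] (G : SimpleGraph V)
    [DecidableRel G.Adj] (n d : ℕ) (c p : ℝ) (hn : Fintype.card V = n)
    (hreg : G.IsRegularOfDegree d) (hspec : specBound G (c * Real.sqrt d))
    (hp : 5 * c * Real.sqrt d ≤ p * d)
    (W : Finset V)
    (hmin : ∀ v ∈ W, 3 * p * d / 5 ≤ ((W.filter (fun u => G.Adj v u)).card : ℝ))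
    (S : Finset V) (hSW : S ⊆ W) (hS : (S.card : ℝ) ≤ c * n / Real.sqrt d) :
    p * d / 5 * S.card
      ≤ ∑ u ∈ S, ∑ v ∈ W \ S, if G.Adj u v then (1 : ℝ) else 0 := by
  have hsparse : (#S : ℝ) * d ≤ c * √d * Fintype.card V := by
    rcases (Nat.cast_nonneg d : (0 : ℝ) ≤ d).eq_or_lt with hd | hd
    · simp [← hd]
    have hsqrt : 0 < √(d : ℝ) := Real.sqrt_pos.mpr hd
    rw [le_div_iff₀ hsqrt] at hS
    calc (#S : ℝ) * d = #S * √d * √d := by rw [mul_assoc, Real.mul_self_sqrt hd.le]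
      _ ≤ c * n * √d := by gcongr
      _ = c * √d * Fintype.card V := by rw [hn]; ring
  have hinside := hspec.edgeCount_self_le_of_card_mul_le G hreg hsparse
  have hdeg := G.mul_card_le_edgeCount fun v hv => hmin v (hSW hv)
  change _ ≤ G.edgeCount S (W \ S)
  rw [G.edgeCount_sdiff hSW]
  have hlam : c * √d * #S ≤ p * d / 5 * #S := by gcongr; linarith
  linarith

/-- Let `G` be an `(n, d, c√d)` algebraic expander with `c ≥ 1`, `pd ≥ 5c√d`, and let
`H` be the subgraph of `G` induced on a vertex set `W` with minimum degree (in `H`)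
at least `3pd/5`. Then every `S ⊆ W` with `|S| ≤ cn/√d` has edge boundary in `H` of
size at least `(pd/5)|S|`. -/
theorem stmt_7 {V : Type} [Fintype V] [DecidableEq V] (G : SimpleGraph V)
    [DecidableRel G.Adj] (n d : ℕ) (c p : ℝ) (hn : Fintype.card V = n)
    (hreg : G.IsRegularOfDegree d) (hspec : specBound G (c * Real.sqrt d))
    (hc : 1 ≤ c) (hp : 5 * c * Real.sqrt d ≤ p * d)
    (W : Finset V)
    (hmin : ∀ v ∈ W, 3 * p * d / 5 ≤ ((W.filter (fun u => G.Adj v u)).card : ℝ))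
    (S : Finset V) (hSW : S ⊆ W) (hS : (S.card : ℝ) ≤ c * n / Real.sqrt d) :
    p * d / 5 * S.card
      ≤ ∑ u ∈ S, ∑ v ∈ W \ S, if G.Adj u v then (1 : ℝ) else 0 :=
  stmt_7_general G n d c p hn hreg hspec hp W hmin S hSW hS
end
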